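/- Let q, a, x be complex numbers with 0 < |q| < 1 and a·x·q^k ≠ 1 for all integers k with 0 ≤ k ≤ n−1, and let n ≥ 1 be an integer. Then ∑_{k=1}^{n} k·[n choose k]_q·q^{k(k−1)/2}·(−a·x)^{k−1} = (a·x;q)_n · ∑_{k=0}^{n−1} q^k/(1 − a·x·q^k). -/

import Mathlib

/-- The finite q-Pochhammer symbol `(a;q)_n = ∏_{k=0}^{n-1} (1 - a q^k)`. -/
noncomputable def qPoch (a q : ℂ) (n : ℕ) : ℂ := ∏ k ∈ Finset.range n, (1 - a * q ^ k)

/-- The Gaussian (q-binomial) coefficient `[n choose k]_q`. -/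
noncomputable def qBinom (q : ℂ) (n k : ℕ) : ℂ := qPoch q q n / (qPoch q q k * qPoch q q (n - k))

/-
Gauss's q-binomial theorem expands `(t;q)_n = ∏_{k<n} (1 - t q^k)` as
`∑_k [n choose k]_q q^(k(k-1)/2) (-t)^k`; its coefficients are forced by the q-Pascal recursion
that comes from appending the factor `1 - t q^n`. Differentiating both sides in `t`, the expansion
gives minus the left-hand side, and the product rule gives `-∑_k q^k ∏_{j ≠ k} (1 - t q^j)`,
which is `-(t;q)_n ∑_k q^k / (1 - t q^k)` when no factor vanishes.
-/

open Polynomial Finset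

@[simp]
lemma qPoch_zero (a q : ℂ) : qPoch a q 0 = 1 :=
  prod_range_zero _

lemma qPoch_succ (a q : ℂ) (n : ℕ) : qPoch a q (n + 1) = qPoch a q n * (1 - a * q ^ n) :=
  prod_range_succ _ _

lemma qPoch_ne_zero {a q : ℂ} {n : ℕ} (h : ∀ k < n, a * q ^ k ≠ 1) : qPoch a q n ≠ 0 :=
  prod_ne_zero_iff.mpr fun k hk => sub_ne_zero.mpr (h k (mem_range.mp hk)).symm

lemma pow_succ_ne_one_of_norm_lt_one {q : ℂ} (hq : ‖q‖ < 1) (k : ℕ) : q ^ (k + 1) ≠ 1 := by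
  intro h
  have := pow_lt_one₀ (norm_nonneg q) hq k.succ_ne_zero
  rw [← norm_pow, h, norm_one] at this
  exact this.false

lemma qPoch_self_ne_zero {q : ℂ} (hq : ∀ k : ℕ, q ^ (k + 1) ≠ 1) (n : ℕ) : qPoch q q n ≠ 0 :=
  qPoch_ne_zero fun k _ => pow_succ' q k ▸ hq k

lemma qBinom_zero_right {q : ℂ} (hq : ∀ k : ℕ, q ^ (k + 1) ≠ 1) (n : ℕ) : qBinom q n 0 = 1 := by
  simp [qBinom, qPoch_self_ne_zero hq]

lemma qBinom_self {q : ℂ} (hq : ∀ k : ℕ, q ^ (k + 1) ≠ 1) (n : ℕ) : qBinom q n n = 1 := by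
  simp [qBinom, qPoch_self_ne_zero hq]

lemma qBinom_succ_succ {q : ℂ} (hq : ∀ k : ℕ, q ^ (k + 1) ≠ 1) {n k : ℕ} (hk : k < n) :
    qBinom q (n + 1) (k + 1) = qBinom q n (k + 1) + q ^ (n - k) * qBinom q n k := by
  obtain ⟨d, rfl⟩ := Nat.exists_eq_add_of_lt hk
  have hq0 := qPoch_self_ne_zero hq
  have hf (m : ℕ) : 1 - q * q ^ m ≠ 0 := sub_ne_zero.mpr (pow_succ' q m ▸ hq m).symm
  simp only [qBinom, show k + d + 1 + 1 - (k + 1) = d + 1 by omega,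
    show k + d + 1 - (k + 1) = d by omega, show k + d + 1 - k = d + 1 by omega,
    qPoch_succ q q (k + d + 1), qPoch_succ q q k, qPoch_succ q q d]
  field_simp [hf k, hf d, hq0 k, hq0 d]
  ring

lemma qBinom_mul_pow_choose_succ_succ {q : ℂ} (hq : ∀ k : ℕ, q ^ (k + 1) ≠ 1) {n k : ℕ}
    (hk : k < n) :
    qBinom q (n + 1) (k + 1) * q ^ (k + 1).choose 2 =
      qBinom q n (k + 1) * q ^ (k + 1).choose 2 + q ^ n * (qBinom q n k * q ^ k.choose 2) := by
  have hpow : q ^ n = q ^ (n - k) * q ^ k := by rw [← pow_add, Nat.sub_add_cancel hk.le]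
  rw [qBinom_succ_succ hq hk, Nat.choose_succ_succ', Nat.choose_one_right, pow_add, hpow]
  ring

lemma prod_one_add_smul_eq_sum {A : Type*} [CommRing A] [Algebra ℂ A] (r : ℕ → ℂ)
    (c : ℕ → ℕ → ℂ) (h_zero : ∀ n, c n 0 = 1) (h_self : ∀ n, c (n + 1) (n + 1) = r n * c n n)
    (h_succ : ∀ n k, k < n → c (n + 1) (k + 1) = c n (k + 1) + r n * c n k) (y : A) (n : ℕ) :
    ∏ k ∈ range n, (1 + r k • y) = ∑ k ∈ range (n + 1), c n k • y ^ k := by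
  induction n with
  | zero => simp [h_zero]
  | succ n ih =>
    have h_middle : ∑ k ∈ range n, c (n + 1) (k + 1) • y ^ (k + 1) =
        ∑ k ∈ range n, c n (k + 1) • y ^ (k + 1) + ∑ k ∈ range n, (r n * c n k) • y ^ (k + 1) := by
      rw [← sum_add_distrib]
      exact sum_congr rfl fun k hk => by rw [h_succ n k (mem_range.mp hk), add_smul]
    have h_shift (k : ℕ) : c n k • y ^ k * r n • y = (r n * c n k) • y ^ (k + 1) := by
      rw [smul_mul_smul_comm, mul_comm (c n k), pow_succ]
    rw [prod_range_succ, ih, mul_add, mul_one, sum_mul, sum_congr rfl fun k _ => h_shift k,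
      sum_range_succ' (fun k => c (n + 1) k • y ^ k),
      sum_range_succ (fun k => c (n + 1) (k + 1) • y ^ (k + 1)), h_middle, h_self,
      sum_range_succ' (fun k => c n k • y ^ k),
      sum_range_succ (fun k => (r n * c n k) • y ^ (k + 1)), h_zero, h_zero]
    abel

theorem qBinomial_theorem {A : Type*} [CommRing A] [Algebra ℂ A] {q : ℂ}
    (hq : ∀ k : ℕ, q ^ (k + 1) ≠ 1) (y : A) (n : ℕ) :
    ∏ k ∈ range n, (1 + q ^ k • y) =
      ∑ k ∈ range (n + 1), (qBinom q n k * q ^ k.choose 2) • y ^ k :=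
  prod_one_add_smul_eq_sum (q ^ ·) (fun n k => qBinom q n k * q ^ k.choose 2)
    (fun n => by simp [qBinom_zero_right hq])
    (fun n => by
      simp only [qBinom_self hq, Nat.choose_succ_succ', Nat.choose_one_right, pow_add]; ring)
    (fun n k hk => qBinom_mul_pow_choose_succ_succ hq hk) y n

lemma eval_derivative_prod_one_add_smul_X {ι : Type*} [DecidableEq ι] (s : Finset ι) (r : ι → ℂ)
    (z : ℂ) :
    (derivative (∏ i ∈ s, (1 + r i • X))).eval z =
      ∑ i ∈ s, r i * ∏ j ∈ s.erase i, (1 + r j * z) := by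
  simp [derivative_prod_finset, eval_finsetSum, eval_prod, mul_comm]

lemma eval_derivative_sum_smul_X_pow (s : Finset ℕ) (c : ℕ → ℂ) (z : ℂ) :
    (derivative (∑ k ∈ s, c k • X ^ k)).eval z = ∑ k ∈ s, c k * k * z ^ (k - 1) := by
  simp [derivative_X_pow, eval_finsetSum, mul_assoc]

lemma prod_mul_sum_div_eq_sum_mul_prod_erase {ι K : Type*} [DecidableEq ι] [Field K]
    (s : Finset ι) (f g : ι → K) (hf : ∀ i ∈ s, f i ≠ 0) :
    (∏ i ∈ s, f i) * ∑ i ∈ s, g i / f i = ∑ i ∈ s, g i * ∏ j ∈ s.erase i, f j := by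
  rw [mul_sum]
  refine sum_congr rfl fun i hi => ?_
  rw [← mul_prod_erase s f hi]
  field_simp [hf i hi]

theorem stmt1_general (q a x : ℂ) (hq1 : ‖q‖ < 1)
    (n : ℕ) (hax : ∀ k : ℕ, k < n → a * x * q ^ k ≠ 1) :
    ∑ k ∈ Finset.Icc 1 n, (k : ℂ) * qBinom q n k * q ^ (k * (k - 1) / 2) * (-(a * x)) ^ (k - 1) =
      qPoch (a * x) q n * ∑ k ∈ Finset.range n, q ^ k / (1 - a * x * q ^ k) := by
  have h_deriv := congrArg (fun p : ℂ[X] => (derivative p).eval (-(a * x)))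
    (qBinomial_theorem (pow_succ_ne_one_of_norm_lt_one hq1) X n)
  simp only [eval_derivative_prod_one_add_smul_X, eval_derivative_sum_smul_X_pow] at h_deriv
  rw [qPoch, prod_mul_sum_div_eq_sum_mul_prod_erase _ _ _
    fun k hk => sub_ne_zero.mpr (hax k (mem_range.mp hk)).symm]
  rw [range_eq_Ico (a := n + 1), sum_eq_sum_Ico_succ_bot n.succ_pos, Nat.cast_zero, mul_zero,
    zero_mul, zero_add] at h_deriv
  convert h_deriv.symm using 1
  · exact sum_congr rfl fun k _ => by rw [Nat.choose_two_right]; ring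
  · exact sum_congr rfl fun i _ => by congr 1; exact prod_congr rfl fun j _ => by ring

theorem stmt1 (q a x : ℂ) (hq0 : 0 < ‖q‖) (hq1 : ‖q‖ < 1)
    (n : ℕ) (hn : 1 ≤ n) (hax : ∀ k : ℕ, k < n → a * x * q ^ k ≠ 1) :
    ∑ k ∈ Finset.Icc 1 n, (k : ℂ) * qBinom q n k * q ^ (k * (k - 1) / 2) * (-(a * x)) ^ (k - 1) =
      qPoch (a * x) q n * ∑ k ∈ Finset.range n, q ^ k / (1 - a * x * q ^ k) :=
  stmt1_general q a x hq1 n hax
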